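/- For the 3-dimensional terminal algebra T³₀₁ (nonzero products e₁e₁ = e₂, e₁e₂ = e₃), the bilinear forms Δ₁₁, Δ₁₂, Δ₁₃, Δ₂₁ and Δ₂₂ - 3Δ₃₁ are cocycles: each θ among them satisfies the terminal cocycle identity θ(b, a(xy) - (ax)y - x(ay)) - θ(a,(bx)y) + θ(a(bx),y) + θ(bx,ay) - θ(a,x(by)) + θ(ax,by) + θ(x,a(by)) = -θ(P*(a,b), xy) + θ(P*(a,b)x, y) + θ(x, P*(a,b)y) for all a,b,x,y, where P*(x,y) = (2/3)xy + (1/3)yx. -/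
import Mathlib


/-- The 3-dimensional algebra `T³₀₁` with nonzero products `e₁e₁ = e₂`, `e₁e₂ = e₃`. -/
def mulT301 (u v : Fin 3 → ℂ) : Fin 3 → ℂ := ![0, u 0 * v 0, u 0 * v 1]

/-- The associated multiplication `P*(x,y) = (2/3)xy + (1/3)yx` of `T³₀₁`. -/
noncomputable def starT301 (u v : Fin 3 → ℂ) : Fin 3 → ℂ :=
  (2 / 3 : ℂ) • mulT301 u v + (1 / 3 : ℂ) • mulT301 v u

/-- The terminal cocycle identity for a bilinear form `θ` on `T³₀₁`. -/
def IsTCocycle (θ : (Fin 3 → ℂ) → (Fin 3 → ℂ) → ℂ) : Prop :=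
  ∀ a b x y : Fin 3 → ℂ,
    θ b (mulT301 a (mulT301 x y) - mulT301 (mulT301 a x) y - mulT301 x (mulT301 a y))
      - θ a (mulT301 (mulT301 b x) y) + θ (mulT301 a (mulT301 b x)) y
      + θ (mulT301 b x) (mulT301 a y)
      - θ a (mulT301 x (mulT301 b y)) + θ (mulT301 a x) (mulT301 b y)
      + θ x (mulT301 a (mulT301 b y))
    = - θ (starT301 a b) (mulT301 x y) + θ (mulT301 (starT301 a b) x) y
      + θ x (mulT301 (starT301 a b) y)

/-- The bilinear form `Δᵢⱼ` with `Δᵢⱼ(e_l, e_m) = δ_{il} δ_{jm}` (0-indexed). -/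
def Δ (i j : Fin 3) (u v : Fin 3 → ℂ) : ℂ := u i * v j

/-- For `T³₀₁`, the bilinear forms `Δ₁₁, Δ₁₂, Δ₁₃, Δ₂₁` and `Δ₂₂ - 3Δ₃₁` are cocycles. -/
theorem T301_cocycles :
    IsTCocycle (Δ 0 0) ∧ IsTCocycle (Δ 0 1) ∧ IsTCocycle (Δ 0 2) ∧
      IsTCocycle (Δ 1 0) ∧ IsTCocycle (fun u v => Δ 1 1 u v - 3 * Δ 2 0 u v) := by
  refine ⟨?_, ?_, ?_, ?_, ?_⟩ <;>
  · intro a b x y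
    simp only [IsTCocycle, Δ, mulT301, starT301, Pi.add_apply, Pi.smul_apply, Pi.sub_apply,
      smul_eq_mul, Matrix.cons_val_zero, Matrix.cons_val_one, Matrix.head_cons,
      Matrix.cons_val_two, Matrix.tail_cons]
    ring
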